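/- Relaxed sufficient condition (relax): Let Γ be a bimatrix game for which there exists x_0 ∈ X such that max_{j∈BR_II(x_0)} α(x_0,e_j) = min_{j} α(x_0,e_j) and min_{j} α(x_0,e_j) ≥ max_{j∈BR_II(x)} α(x,e_j) for all x ∈ X. Then v_A = α^L = α^H. -/

import Mathlib

open Matrix

noncomputable section

/-- The set of mixed strategies: the standard simplex in `ℝ^m`. -/
def Simp (m : ℕ) : Set (Fin m → ℝ) := stdSimplex ℝ (Fin m)

/-- Bilinear payoff `xᵀ A y`. -/
def pay {m n : ℕ} (A : Matrix (Fin m) (Fin n) ℝ) (x : Fin m → ℝ) (y : Fin n → ℝ) : ℝ :=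
  x ⬝ᵥ A.mulVec y

/-- Payoff of a mixed strategy `x` against the pure strategy `j`: `α(x, e_j) = (xᵀA)_j`. -/
def purePay {m n : ℕ} (A : Matrix (Fin m) (Fin n) ℝ) (x : Fin m → ℝ) (j : Fin n) : ℝ :=
  Matrix.vecMul x A j

/-- Pure best replies of player II against `x`. -/
def BRII {m n : ℕ} (B : Matrix (Fin m) (Fin n) ℝ) (x : Fin m → ℝ) : Set (Fin n) :=
  {j | ∀ k, purePay B x k ≤ purePay B x j}

/-- Best-reply region `X(j)` of column `j`. -/
def XReg {m n : ℕ} (B : Matrix (Fin m) (Fin n) ℝ) (j : Fin n) : Set (Fin m → ℝ) :=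
  {x ∈ Simp m | j ∈ BRII B x}

/-- `D`: columns whose best-reply region has a fully mixed point. -/
def Dset {m n : ℕ} (B : Matrix (Fin m) (Fin n) ℝ) : Set (Fin n) :=
  {j | ∃ x ∈ XReg B j, ∀ i, 0 < x i}

/-- `E(j)`: columns of `B` payoff-equivalent to column `j`. -/
def Ecols {m n : ℕ} (B : Matrix (Fin m) (Fin n) ℝ) (j : Fin n) : Set (Fin n) :=
  {k | ∀ i, B i k = B i j}

/-- `min_j α(x, e_j)`. -/
def minPure {m n : ℕ} (A : Matrix (Fin m) (Fin n) ℝ) (x : Fin m → ℝ) : ℝ :=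
  sInf {w | ∃ j, w = purePay A x j}

/-- `max_j α(x, e_j)`. -/
def maxPure {m n : ℕ} (A : Matrix (Fin m) (Fin n) ℝ) (x : Fin m → ℝ) : ℝ :=
  sSup {w | ∃ j, w = purePay A x j}

/-- `max_{j ∈ BR_II(x)} α(x, e_j)`. -/
def maxBR {m n : ℕ} (A B : Matrix (Fin m) (Fin n) ℝ) (x : Fin m → ℝ) : ℝ :=
  sSup {w | ∃ j ∈ BRII B x, w = purePay A x j}

/-- Matrix game value `v_A = max_{x ∈ X} min_j α(x, e_j)`. -/
def matVal {m n : ℕ} (A : Matrix (Fin m) (Fin n) ℝ) : ℝ :=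
  sSup {v | ∃ x ∈ Simp m, v = minPure A x}

/-- `min_{k ∈ E(j)} α(x, e_k)`. -/
def minE {m n : ℕ} (A B : Matrix (Fin m) (Fin n) ℝ) (j : Fin n) (x : Fin m → ℝ) : ℝ :=
  sInf {w | ∃ k ∈ Ecols B j, w = purePay A x k}

/-- Commitment value `α^L = max_{j∈D} max_{x∈X(j)} min_{k∈E(j)} α(x,e_k)`. -/
def alphaL {m n : ℕ} (A B : Matrix (Fin m) (Fin n) ℝ) : ℝ :=
  sSup {v | ∃ j ∈ Dset B, ∃ x ∈ XReg B j, v = minE A B j x}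

/-- Highest leader payoff `α^H = max_{j : X(j)≠∅} max_{x∈X(j)} α(x,e_j)`. -/
def alphaH {m n : ℕ} (A B : Matrix (Fin m) (Fin n) ℝ) : ℝ :=
  sSup {v | ∃ j, ∃ x ∈ XReg B j, v = purePay A x j}

/-- Commitment optimal strategies of the leader (player I). -/
def XLset {m n : ℕ} (A B : Matrix (Fin m) (Fin n) ℝ) : Set (Fin m → ℝ) :=
  {x | ∃ j ∈ Dset B, x ∈ XReg B j ∧ minE A B j x = alphaL A B}

/-- Non-degeneracy for player I: no mixed strategy of player I has more pure best
replies (among player II's pure strategies) than the size of its support. -/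
def NondegFor {m n : ℕ} (B : Matrix (Fin m) (Fin n) ℝ) : Prop :=
  ∀ x ∈ Simp m, (BRII B x).ncard ≤ {i | x i ≠ 0}.ncard

/-- Nash equilibrium of the bimatrix game `(A,B)`. -/
def isNE {m n : ℕ} (A B : Matrix (Fin m) (Fin n) ℝ) (x : Fin m → ℝ) (y : Fin n → ℝ) : Prop :=
  x ∈ Simp m ∧ y ∈ Simp n ∧
  (∀ x' ∈ Simp m, pay A x' y ≤ pay A x y) ∧
  (∀ y' ∈ Simp n, pay B x y' ≤ pay B x y)

/-- Strategies of player I appearing in some Nash equilibrium. -/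
def NEX {m n : ℕ} (A B : Matrix (Fin m) (Fin n) ℝ) : Set (Fin m → ℝ) :=
  {x | ∃ y, isNE A B x y}

/-- Strategies of player II appearing in some Nash equilibrium. -/
def NEY {m n : ℕ} (A B : Matrix (Fin m) (Fin n) ℝ) : Set (Fin n → ℝ) :=
  {y | ∃ x, isNE A B x y}

/-- Weakly unilaterally competitive bimatrix game. -/
def WUC {m n : ℕ} (A B : Matrix (Fin m) (Fin n) ℝ) : Prop :=
  (∀ x₁ ∈ Simp m, ∀ x₂ ∈ Simp m, ∀ y ∈ Simp n,
    (pay A x₁ y > pay A x₂ y → pay B x₁ y ≤ pay B x₂ y) ∧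
    (pay A x₁ y = pay A x₂ y → pay B x₁ y = pay B x₂ y)) ∧
  (∀ y₁ ∈ Simp n, ∀ y₂ ∈ Simp n, ∀ x ∈ Simp m,
    (pay B x y₁ > pay B x y₂ → pay A x y₁ ≤ pay A x y₂) ∧
    (pay B x y₁ = pay B x y₂ → pay A x y₁ = pay A x y₂))

/-! Write `v = min_j α(x₀, e_j)`. The hypothesis says that every best-reply payoff `α(x, e_j)`,
`j ∈ BR_II(x)`, is at most `v`, and that `v` is attained as such a payoff at `x₀`. Hence `v` is
the largest element of each of the three sets whose suprema define `v_A`, `α^L` and `α^H`. For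
`α^L` one needs a best reply to `x₀` lying in `D`: perturbing `x₀` slightly into the interior of
the simplex only shrinks the set of best replies, and a best reply at the perturbed, fully mixed
point lies in `D`. -/

open Filter Topology

section BestReplies

variable {m n : ℕ}

lemma setOf_exists_eq_purePay (A : Matrix (Fin m) (Fin n) ℝ) (x : Fin m → ℝ) :
    {w | ∃ j, w = purePay A x j} = Set.range (purePay A x) := by
  ext w
  simp [eq_comm]

lemma minPure_le_purePay (A : Matrix (Fin m) (Fin n) ℝ) (x : Fin m → ℝ) (j : Fin n) :
    minPure A x ≤ purePay A x j := by
  rw [minPure, setOf_exists_eq_purePay]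
  exact csInf_le (Set.finite_range _).bddBelow ⟨j, rfl⟩

lemma finite_setOf_purePay {A : Matrix (Fin m) (Fin n) ℝ} (x : Fin m → ℝ)
    (p : Fin n → Prop) : {w | ∃ j, p j ∧ w = purePay A x j}.Finite :=
  (Set.finite_range (purePay A x)).subset (by rintro w ⟨j, -, rfl⟩; exact ⟨j, rfl⟩)

lemma purePay_le_maxBR {A B : Matrix (Fin m) (Fin n) ℝ} {x : Fin m → ℝ} {j : Fin n}
    (hj : j ∈ BRII B x) : purePay A x j ≤ maxBR A B x :=
  le_csSup (finite_setOf_purePay x _).bddAbove ⟨j, hj, rfl⟩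

lemma minE_le_purePay (A B : Matrix (Fin m) (Fin n) ℝ) (j : Fin n) (x : Fin m → ℝ) :
    minE A B j x ≤ purePay A x j :=
  csInf_le (finite_setOf_purePay x _).bddBelow ⟨j, fun _ => rfl, rfl⟩

lemma minPure_le_minE (A B : Matrix (Fin m) (Fin n) ℝ) (j : Fin n) (x : Fin m → ℝ) :
    minPure A x ≤ minE A B j x :=
  le_csInf ⟨_, j, fun _ => rfl, rfl⟩ (by rintro w ⟨k, -, rfl⟩; exact minPure_le_purePay A x k)

lemma BRII_nonempty (hn : 0 < n) (B : Matrix (Fin m) (Fin n) ℝ) (x : Fin m → ℝ) :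
    (BRII B x).Nonempty := by
  obtain ⟨j, -, hj⟩ := Finset.univ.exists_max_image (purePay B x) ⟨⟨0, hn⟩, Finset.mem_univ _⟩
  exact ⟨j, fun k => hj k (Finset.mem_univ k)⟩

lemma exists_mem_BRII_purePay_eq_maxBR (hn : 0 < n) (A B : Matrix (Fin m) (Fin n) ℝ)
    (x : Fin m → ℝ) : ∃ j ∈ BRII B x, purePay A x j = maxBR A B x := by
  obtain ⟨j, hj⟩ := BRII_nonempty hn B x
  have hne : {w | ∃ j ∈ BRII B x, w = purePay A x j}.Nonempty := ⟨_, j, hj, rfl⟩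
  obtain ⟨k, hk, hkx⟩ := hne.csSup_mem (finite_setOf_purePay x _)
  exact ⟨k, hk, hkx.symm⟩

lemma continuous_purePay (B : Matrix (Fin m) (Fin n) ℝ) (j : Fin n) :
    Continuous fun x => purePay B x j :=
  (continuous_apply j).comp (continuous_id.matrix_vecMul continuous_const)

lemma eventually_BRII_subset (B : Matrix (Fin m) (Fin n) ℝ) (x₀ : Fin m → ℝ) :
    ∀ᶠ x in 𝓝 x₀, BRII B x ⊆ BRII B x₀ := by
  suffices ∀ k, ∀ᶠ x in 𝓝 x₀, k ∉ BRII B x₀ → k ∉ BRII B x by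
    filter_upwards [eventually_all.2 this] with x hx k
    exact not_imp_not.1 (hx k)
  intro k
  by_cases hk : k ∈ BRII B x₀
  · exact Eventually.of_forall fun _ h => absurd hk h
  · obtain ⟨k', hk'⟩ : ∃ k', purePay B x₀ k < purePay B x₀ k' := by
      simpa [BRII] using hk
    filter_upwards [(continuous_purePay B k).continuousAt.eventually_lt
      (continuous_purePay B k').continuousAt hk'] with x hx _ hkx
    exact (hkx k').not_gt hx

end BestReplies

lemma exists_pos_mem_Simp_of_mem_nhds {m : ℕ} {x₀ : Fin m → ℝ} (hx₀ : x₀ ∈ Simp m)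
    {U : Set (Fin m → ℝ)} (hU : U ∈ 𝓝 x₀) : ∃ x ∈ U ∩ Simp m, ∀ i, 0 < x i := by
  have hm : (0 : ℝ) < m := by
    rcases m.eq_zero_or_pos with rfl | hm
    · simpa using hx₀.2
    · exact_mod_cast hm
  set c : Fin m → ℝ := fun _ => (m : ℝ)⁻¹
  have hc : c ∈ Simp m := ⟨fun _ => by positivity, by simp [c, hm.ne']⟩
  have hγ : Tendsto (fun ε : ℝ => x₀ + ε • (c - x₀)) (𝓝[>] 0) (𝓝 x₀) := by
    refine tendsto_nhdsWithin_of_tendsto_nhds ?_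
    simpa using ((continuous_id.smul continuous_const).const_add x₀).tendsto (0 : ℝ)
  obtain ⟨ε, hεU, hε0, hε1⟩ := ((hγ.eventually_mem hU).and (Ioo_mem_nhdsGT one_pos)).exists
  refine ⟨_, ⟨hεU, (convex_stdSimplex ℝ _).add_smul_sub_mem hx₀ hc ⟨hε0.le, hε1.le⟩⟩, fun i => ?_⟩
  have hci : 0 < c i := by positivity
  have hxi : 0 ≤ x₀ i := hx₀.1 i
  simp only [Pi.add_apply, Pi.smul_apply, Pi.sub_apply, smul_eq_mul]
  nlinarith

lemma exists_mem_Dset_mem_BRII {m n : ℕ} (hn : 0 < n) (B : Matrix (Fin m) (Fin n) ℝ)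
    {x₀ : Fin m → ℝ} (hx₀ : x₀ ∈ Simp m) : ∃ j ∈ Dset B, j ∈ BRII B x₀ := by
  obtain ⟨x, ⟨hsub, hx⟩, hpos⟩ := exists_pos_mem_Simp_of_mem_nhds hx₀ (eventually_BRII_subset B x₀)
  obtain ⟨j, hj⟩ := BRII_nonempty hn B x
  exact ⟨j, ⟨x, ⟨hx, hj⟩, hpos⟩, hsub hj⟩

/-- relaxed sufficient condition (relax): if there exists `x₀ ∈ X` with
`max_{j∈BR_II(x₀)} α(x₀,e_j) = min_j α(x₀,e_j)` and
`min_j α(x₀,e_j) ≥ max_{j∈BR_II(x)} α(x,e_j)` for all `x ∈ X`, then `v_A = α^L = α^H`. -/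
theorem stmt6 {m n : ℕ} (A B : Matrix (Fin m) (Fin n) ℝ)
    (x₀ : Fin m → ℝ) (hx₀ : x₀ ∈ Simp m)
    (heq : maxBR A B x₀ = minPure A x₀)
    (hge : ∀ x ∈ Simp m, maxBR A B x ≤ minPure A x₀) :
    matVal A = alphaL A B ∧ alphaL A B = alphaH A B := by
  rcases n.eq_zero_or_pos with rfl | hn
  · have hX : ∃ x, x ∈ Simp m := ⟨x₀, hx₀⟩
    simp [matVal, alphaL, alphaH, minPure, hX]
  set v := minPure A x₀
  have hBR : ∀ x ∈ Simp m, ∀ j ∈ BRII B x, purePay A x j ≤ v :=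
    fun x hx j hj => (purePay_le_maxBR hj).trans (hge x hx)
  obtain ⟨j₀, hj₀, hj₀v⟩ := exists_mem_BRII_purePay_eq_maxBR hn A B x₀
  obtain ⟨j₁, hj₁D, hj₁⟩ := exists_mem_Dset_mem_BRII hn B hx₀
  have hV : IsGreatest {v | ∃ x ∈ Simp m, v = minPure A x} v := by
    refine ⟨⟨x₀, hx₀, rfl⟩, ?_⟩
    rintro _ ⟨x, hx, rfl⟩
    obtain ⟨j, hj⟩ := BRII_nonempty hn B x
    exact (minPure_le_purePay A x j).trans (hBR x hx j hj)
  have hL : IsGreatest {v | ∃ j ∈ Dset B, ∃ x ∈ XReg B j, v = minE A B j x} v := by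
    refine ⟨⟨j₁, hj₁D, x₀, ⟨hx₀, hj₁⟩, le_antisymm (minPure_le_minE A B j₁ x₀)
      ((minE_le_purePay A B j₁ x₀).trans (hBR x₀ hx₀ j₁ hj₁))⟩, ?_⟩
    rintro _ ⟨j, -, x, ⟨hx, hj⟩, rfl⟩
    exact (minE_le_purePay A B j x).trans (hBR x hx j hj)
  have hH : IsGreatest {v | ∃ j, ∃ x ∈ XReg B j, v = purePay A x j} v := by
    refine ⟨⟨j₀, x₀, ⟨hx₀, hj₀⟩, (hj₀v.trans heq).symm⟩, ?_⟩
    rintro _ ⟨j, x, ⟨hx, hj⟩, rfl⟩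
    exact hBR x hx j hj
  exact ⟨hV.csSup_eq.trans hL.csSup_eq.symm, hL.csSup_eq.trans hH.csSup_eq.symm⟩
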